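/- Let C ⊆ C₀ and D ⊆ D₀ be finite Boolean subalgebras, u ∈ C₀, and suppose D₀ is atomless. For every Boolean isomorphism h : C → D there exists w ∈ D₀ such that for all x ∈ C: x ≤ u iff h(x) ≤ w, and x ≤ u' iff h(x) ≤ w'. -/

import Mathlib

/-- `C` is a Boolean subalgebra of the ambient Boolean algebra, viewed as a set. -/
def IsBoolSubalg {A : Type*} [BooleanAlgebra A] (C : Set A) : Prop :=
  (⊥ : A) ∈ C ∧ (⊤ : A) ∈ C ∧ (∀ a ∈ C, ∀ b ∈ C, a ⊔ b ∈ C) ∧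
    (∀ a ∈ C, ∀ b ∈ C, a ⊓ b ∈ C) ∧ (∀ a ∈ C, aᶜ ∈ C)

/-- `h` is a Boolean isomorphism from the subalgebra `C` onto the subalgebra `D`. -/
def IsBoolIsoOn {A B : Type*} [BooleanAlgebra A] [BooleanAlgebra B]
    (h : A → B) (C : Set A) (D : Set B) : Prop :=
  Set.BijOn h C D ∧ (∀ a ∈ C, ∀ b ∈ C, h (a ⊔ b) = h a ⊔ h b) ∧
    (∀ a ∈ C, ∀ b ∈ C, h (a ⊓ b) = h a ⊓ h b) ∧ (∀ a ∈ C, h aᶜ = (h a)ᶜ)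

/-!
Let `c` and `d` be the largest elements of `C` below `u` and below `uᶜ`. For `x ∈ C` we have
`x ≤ u ↔ x \ c = ⊥`, so any `w ≥ h c` such that no nonzero element of `D` lies below `w \ h c`
satisfies `x ≤ u ↔ h x ≤ w`; symmetrically for `wᶜ`, `uᶜ` and `h d`. As `D` is finite and the
ambient algebra atomless, choosing `⊥ < f p < p` for every atom `p` of `D` and putting
`t = ⨆ p, f p` gives an element such that no nonzero element of `D` lies below `t` or below `tᶜ`.
Then `w = h c ⊔ t \ h d` works.
-/

section Atomless

variable {B : Type*} [BooleanAlgebra B] {D : Set B}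

theorem InfClosed.disjoint_of_minimal_of_ne (hD : InfClosed D) {p q : B}
    (hp : Minimal (· ∈ {x ∈ D | x ≠ ⊥}) p) (hq : Minimal (· ∈ {x ∈ D | x ≠ ⊥}) q)
    (hpq : p ≠ q) : Disjoint p q := by
  by_contra hne
  have hmem : p ⊓ q ∈ {x ∈ D | x ≠ ⊥} := ⟨hD hp.prop.1 hq.prop.1, disjoint_iff.not.1 hne⟩
  exact hpq ((hp.eq_of_le hmem inf_le_left).symm.trans (hq.eq_of_le hmem inf_le_right))

theorem InfClosed.exists_forall_eq_bot_of_le_or_le_compl (hD : InfClosed D) (hfin : D.Finite)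
    (hB : ∀ b : B, ¬IsAtom b) : ∃ t : B, ∀ y ∈ D, y ≤ t ∨ y ≤ tᶜ → y = ⊥ := by
  classical
  set P := {p | Minimal (· ∈ {x ∈ D | x ≠ ⊥}) p}
  have hPfin : P.Finite := hfin.subset fun p hp => hp.prop.1
  have hsplit : ∀ p ∈ P, ∃ q < p, q ≠ ⊥ := fun p hp => by
    simpa [IsAtom, hp.prop.2] using hB p
  choose! f hfp hf0 using hsplit
  set t := hPfin.toFinset.sup f
  have hft : ∀ p ∈ P, f p ≤ t := fun p hp => Finset.le_sup (f := f) (hPfin.mem_toFinset.2 hp)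
  have hpt : ∀ p ∈ P, p ⊓ t ≤ f p := fun p hp => by
    rw [Finset.sup_inf_distrib_left]
    refine Finset.sup_le fun q hq => ?_
    obtain rfl | hpq := eq_or_ne p q
    · exact inf_le_right
    · have hq : q ∈ P := hPfin.mem_toFinset.1 hq
      have hdisj := (hD.disjoint_of_minimal_of_ne hp hq hpq).mono_right (hfp q hq).le
      exact hdisj.le_bot.trans bot_le
  refine ⟨t, fun y hy hyt => ?_⟩
  by_contra hne
  obtain ⟨p, hpy, hp⟩ := (hfin.subset fun x hx => hx.1).isPWO.exists_le_minimal
    (show y ∈ {x ∈ D | x ≠ ⊥} from ⟨hy, hne⟩)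
  rcases hyt with hyt | hyt
  · exact (hfp p hp).not_ge ((le_inf le_rfl (hpy.trans hyt)).trans (hpt p hp))
  · have hfpt : f p ≤ tᶜ ⊓ t := le_inf ((hfp p hp).le.trans (hpy.trans hyt)) (hft p hp)
    exact hf0 p hp (le_bot_iff.1 (compl_inf_self t ▸ hfpt))

end Atomless

section Subalgebra

variable {A B : Type*} [BooleanAlgebra A] [BooleanAlgebra B] {C : Set A} {D : Set B} {h : A → B}

theorem IsBoolSubalg.infClosed (hC : IsBoolSubalg C) : InfClosed C :=
  fun _ ha _ hb => hC.2.2.2.1 _ ha _ hb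

theorem IsBoolSubalg.exists_isGreatest_le (hC : IsBoolSubalg C) (hfin : C.Finite) (u : A) :
    ∃ c, IsGreatest {x ∈ C | x ≤ u} c := by
  classical
  have hs : {x ∈ C | x ≤ u}.Finite := hfin.subset fun x hx => hx.1
  refine ⟨hs.toFinset.sup id, ?_, fun x hx => Finset.le_sup (f := id) (hs.mem_toFinset.2 hx)⟩
  exact Finset.sup_induction ⟨hC.1, bot_le⟩
    (fun a ha b hb => ⟨hC.2.2.1 a ha.1 b hb.1, sup_le ha.2 hb.2⟩) fun x hx => hs.mem_toFinset.1 hx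

theorem IsBoolSubalg.sdiff_mem (hC : IsBoolSubalg C) {x y : A} (hx : x ∈ C) (hy : y ∈ C) :
    x \ y ∈ C := by
  rw [sdiff_eq]
  exact hC.2.2.2.1 x hx _ (hC.2.2.2.2 y hy)

namespace IsBoolIsoOn

theorem map_bot (hC : IsBoolSubalg C) (hiso : IsBoolIsoOn h C D) : h ⊥ = ⊥ := by
  have := hiso.2.2.1 ⊥ hC.1 ⊥ᶜ (hC.2.2.2.2 ⊥ hC.1)
  rwa [hiso.2.2.2 ⊥ hC.1, inf_compl_self, inf_compl_self] at this

theorem map_sdiff (hC : IsBoolSubalg C) (hiso : IsBoolIsoOn h C D) {x y : A} (hx : x ∈ C)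
    (hy : y ∈ C) : h (x \ y) = h x \ h y := by
  rw [sdiff_eq, sdiff_eq, hiso.2.2.1 x hx _ (hC.2.2.2.2 y hy), hiso.2.2.2 y hy]

theorem eq_bot_of_map_eq_bot (hC : IsBoolSubalg C) (hiso : IsBoolIsoOn h C D) {x : A}
    (hx : x ∈ C) (hhx : h x = ⊥) : x = ⊥ :=
  hiso.1.injOn hx hC.1 (hhx.trans (hiso.map_bot hC).symm)

theorem monotoneOn (hiso : IsBoolIsoOn h C D) : MonotoneOn h C := fun x hx y hy hxy => by
  rw [← inf_eq_left, ← hiso.2.2.1 x hx y hy, inf_eq_left.2 hxy]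

theorem disjoint_map (hC : IsBoolSubalg C) (hiso : IsBoolIsoOn h C D) {x y : A} (hx : x ∈ C)
    (hy : y ∈ C) (hxy : Disjoint x y) : Disjoint (h x) (h y) := by
  rw [disjoint_iff, ← hiso.2.2.1 x hx y hy, hxy.eq_bot, hiso.map_bot hC]

theorem le_iff_map_le (hC : IsBoolSubalg C) (hiso : IsBoolIsoOn h C D) {u c : A} {w : B}
    (hc : IsGreatest {x ∈ C | x ≤ u} c) (hcw : h c ≤ w) (hw : ∀ y ∈ D, y ≤ w \ h c → y = ⊥)
    {x : A} (hx : x ∈ C) : x ≤ u ↔ h x ≤ w := by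
  refine ⟨fun hxu => (hiso.monotoneOn hx hc.1.1 (hc.2 ⟨hx, hxu⟩)).trans hcw, fun hxw => ?_⟩
  have hxc : x \ c ∈ C := hC.sdiff_mem hx hc.1.1
  have hdiff : h (x \ c) = ⊥ := hw _ (hiso.1.mapsTo hxc)
    (by rw [hiso.map_sdiff hC hx hc.1.1]; exact sdiff_le_sdiff_right hxw)
  exact (sdiff_eq_bot_iff.1 (hiso.eq_bot_of_map_eq_bot hC hxc hdiff)).trans hc.1.2

end IsBoolIsoOn

end Subalgebra

/-- If `C ⊆ C₀` and `D ⊆ D₀` are finite Boolean subalgebras, `u ∈ C₀`, `D₀` is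
atomless, and `h : C → D` is a Boolean isomorphism, then there is `w ∈ D₀` with
`x ≤ u ↔ h x ≤ w` and `x ≤ u' ↔ h x ≤ w'` for all `x ∈ C`. -/
theorem exists_mirror_element {A B : Type*} [BooleanAlgebra A] [BooleanAlgebra B]
    {C : Set A} {D : Set B} (hC : IsBoolSubalg C) (hD : IsBoolSubalg D)
    (hCfin : C.Finite) (hDfin : D.Finite) (u : A)
    (hatomless : ∀ b : B, ¬IsAtom b)
    (h : A → B) (hiso : IsBoolIsoOn h C D) :
    ∃ w : B, ∀ x ∈ C, (x ≤ u ↔ h x ≤ w) ∧ (x ≤ uᶜ ↔ h x ≤ wᶜ) := by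
  obtain ⟨c, hc⟩ := hC.exists_isGreatest_le hCfin u
  obtain ⟨d, hd⟩ := hC.exists_isGreatest_le hCfin uᶜ
  obtain ⟨t, ht⟩ := hD.infClosed.exists_forall_eq_bot_of_le_or_le_compl hDfin hatomless
  have hcd : Disjoint (h c) (h d) :=
    hiso.disjoint_map hC hc.1.1 hd.1.1 (disjoint_compl_right.mono hc.1.2 hd.1.2)
  set w := h c ⊔ t \ h d
  have hwc : w \ h c ≤ t := sdiff_le_iff.2 (sup_le_sup_left sdiff_le _)
  have hdw : h d ≤ wᶜ :=
    le_compl_iff_disjoint_right.2 (hcd.symm.sup_right disjoint_sdiff_self_right)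
  have hwd : wᶜ \ h d ≤ tᶜ := by
    rw [sdiff_le_iff, ← compl_le_compl_iff_le, compl_sup, compl_compl, compl_compl, inf_comm,
      ← sdiff_eq]
    exact le_sup_right
  refine ⟨w, fun x hx => ⟨?_, ?_⟩⟩
  · exact hiso.le_iff_map_le hC hc le_sup_left (fun y hy hyw => ht y hy (.inl (hyw.trans hwc))) hx
  · exact hiso.le_iff_map_le hC hd hdw (fun y hy hyw => ht y hy (.inr (hyw.trans hwd))) hx
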